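/- Let ø be a principal ideal domain and let A, B be n×n matrices over ø with nonzero determinant. Then for every 1 ≤ k ≤ n, δ_{n-k}(B)·δ_k(AB) divides δ_k(A)·δ_n(B), and likewise δ_{n-k}(A)·δ_k(AB) divides δ_k(B)·δ_n(A). -/

import Mathlib

/-! Smith normal form writes `B = U D V` with `D` diagonal and `U`, `V` unimodular; since every
minor of `M N` is a combination of minors of `N` (and of `M`), unimodular factors do not change
determinantal divisors, so we may take `B = D`. A `k`-minor of `C` with column set `J`, times
`det D`, then equals the principal minor of `D` on the complement of `J` times the minor of `C D`
on the same rows and columns. The second divisibility is the first one for `Bᵀ, Aᵀ`. -/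

/-- The `k`-th determinantal divisor of a square matrix: the ideal generated by
all `k × k` minors.  For `k = 0` this is the whole ring, and for `k` larger than
the size of the matrix it is the zero ideal. -/
def detDiv {R : Type*} [CommRing R] {ι : Type*} [Fintype ι] (k : ℕ)
    (A : Matrix ι ι R) : Ideal R :=
  Ideal.span {x | ∃ f g : Fin k ↪ ι, x = (A.submatrix f g).det}

open Matrix Finset

theorem Matrix.det_mul_eq_sum_prod_mul_det_submatrix {R m ι : Type*} [CommRing R] [Fintype m]
    [DecidableEq m] [Fintype ι] (M : Matrix m ι R) (N : Matrix ι m R) :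
    (M * N).det = ∑ r : m → ι, (∏ i, M i (r i)) * (N.submatrix r id).det := by
  have hrows : M * N = fun i => ∑ t, M i t • N t := by
    ext i j
    simp [Matrix.mul_apply, Finset.sum_apply]
  have hexpand :=
    (detRowAlternating (R := R) (n := m)).toMultilinearMap.map_sum fun i t => M i t • N t
  simp only [AlternatingMap.coe_multilinearMap, MultilinearMap.map_smul_univ] at hexpand
  rw [hrows]
  exact hexpand

theorem Matrix.exists_isUnit_det_mul_diagonal_mul_eq {R ι : Type*} [CommRing R] [IsDomain R]
    [IsPrincipalIdealRing R] [Fintype ι] [DecidableEq ι] (A : Matrix ι ι R) (hA : A.det ≠ 0) :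
    ∃ (U V : Matrix ι ι R) (d : ι → R),
      IsUnit U.det ∧ IsUnit V.det ∧ A = U * diagonal d * V := by
  set φ := A.mulVecLin
  set e := LinearEquiv.ofInjective φ (mulVec_injective_of_det_ne_zero hA)
  set b := Pi.basisFun R ι
  obtain ⟨b', d, bN, hbN⟩ := Submodule.exists_smith_normal_form_of_rank_eq b e.finrank_eq.symm
  refine ⟨b.toMatrix b', LinearMap.toMatrix b bN e, d,
    isUnit_det_of_right_inverse (b.toMatrix_mul_toMatrix_flip b'), e.isUnit_det b bN, ?_⟩
  have hsubtype :
      LinearMap.toMatrix bN b (LinearMap.range φ).subtype = b.toMatrix b' * diagonal d := by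
    ext j i
    simp [LinearMap.toMatrix_apply, mul_diagonal, hbN i, Module.Basis.toMatrix_apply, mul_comm]
  have hφ : (LinearMap.range φ).subtype ∘ₗ (e : (ι → R) →ₗ[R] _) = φ :=
    LinearMap.ext fun _ => rfl
  calc A = LinearMap.toMatrix b b φ := (LinearMap.toMatrix'_toLin' A).symm
    _ = LinearMap.toMatrix b b ((LinearMap.range φ).subtype ∘ₗ (e : (ι → R) →ₗ[R] _)) := by
        rw [hφ]
    _ = _ := by rw [LinearMap.toMatrix_comp b bN b, hsubtype]

section detDiv

variable {R ι : Type*} [CommRing R] [Fintype ι]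

theorem detDiv_transpose (k : ℕ) (A : Matrix ι ι R) : detDiv k Aᵀ = detDiv k A := by
  suffices h : ∀ B : Matrix ι ι R, detDiv k Bᵀ ≤ detDiv k B from
    (h A).antisymm (by simpa using h Aᵀ)
  intro B
  refine Ideal.span_le.2 ?_
  rintro _ ⟨f, g, rfl⟩
  exact Ideal.subset_span ⟨g, f, by rw [← transpose_submatrix, det_transpose]⟩

theorem det_submatrix_mem_detDiv {k : ℕ} (N : Matrix ι ι R) (r : Fin k → ι) (g : Fin k ↪ ι) :
    (N.submatrix r g).det ∈ detDiv k N := by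
  by_cases hr : Function.Injective r
  · exact Ideal.subset_span ⟨⟨r, hr⟩, g, rfl⟩
  · obtain ⟨i, j, hij, hne⟩ := Function.not_injective_iff.1 hr
    rw [det_zero_of_row_eq hne (by ext; simp [hij])]
    exact Ideal.zero_mem _

theorem detDiv_mul_le_right (k : ℕ) (M N : Matrix ι ι R) : detDiv k (M * N) ≤ detDiv k N := by
  refine Ideal.span_le.2 ?_
  rintro _ ⟨f, g, rfl⟩
  rw [submatrix_mul M N f id g Function.bijective_id, det_mul_eq_sum_prod_mul_det_submatrix]
  exact Ideal.sum_mem _ fun r _ => Ideal.mul_mem_left _ _ (det_submatrix_mem_detDiv N r g)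

theorem detDiv_mul_le_left (k : ℕ) (M N : Matrix ι ι R) : detDiv k (M * N) ≤ detDiv k M := by
  rw [← detDiv_transpose k (M * N), ← detDiv_transpose k M, transpose_mul]
  exact detDiv_mul_le_right k Nᵀ Mᵀ

variable [DecidableEq ι]

theorem detDiv_card_le_span_det (M : Matrix ι ι R) :
    detDiv (Fintype.card ι) M ≤ Ideal.span {M.det} := by
  refine Ideal.span_le.2 ?_
  rintro _ ⟨f, g, rfl⟩
  have hbij (h : Fin (Fintype.card ι) ↪ ι) : Function.Bijective h :=
    (Fintype.bijective_iff_injective_and_card h).2 ⟨h.injective, Fintype.card_fin _⟩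
  set ef := Equiv.ofBijective f (hbij f)
  set eg := Equiv.ofBijective g (hbij g)
  have hperm : M.submatrix f g = (M.submatrix ef ef).submatrix id (eg.trans ef.symm) := by
    ext
    simp [ef, eg, Equiv.ofBijective_apply_symm_apply]
  rw [hperm, det_permute', det_submatrix_equiv_self]
  exact Ideal.mul_mem_left _ _ (Ideal.mem_span_singleton_self _)

theorem detDiv_mul_left_of_isUnit_det (k : ℕ) {U : Matrix ι ι R} (hU : IsUnit U.det)
    (A : Matrix ι ι R) : detDiv k (U * A) = detDiv k A :=
  (detDiv_mul_le_right k U A).antisymm <| by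
    simpa [← Matrix.mul_assoc, nonsing_inv_mul _ hU] using detDiv_mul_le_right k U⁻¹ (U * A)

theorem detDiv_mul_right_of_isUnit_det (k : ℕ) {U : Matrix ι ι R} (hU : IsUnit U.det)
    (A : Matrix ι ι R) : detDiv k (A * U) = detDiv k A :=
  (detDiv_mul_le_left k A U).antisymm <| by
    simpa [Matrix.mul_assoc, mul_nonsing_inv _ hU] using detDiv_mul_le_left k (A * U) U⁻¹

theorem prod_mem_detDiv_diagonal (d : ι → R) (S : Finset ι) :
    ∏ t ∈ S, d t ∈ detDiv S.card (diagonal d) := by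
  let e : Fin S.card ↪ ι := S.equivFin.symm.toEmbedding.trans (Function.Embedding.subtype _)
  refine Ideal.subset_span ⟨e, e, ?_⟩
  rw [submatrix_diagonal_embedding, det_diagonal, ← S.prod_coe_sort]
  exact (S.equivFin.symm.prod_comp _).symm

theorem detDiv_mul_span_det_diagonal_le (k : ℕ) (C : Matrix ι ι R) (d : ι → R) :
    detDiv k C * Ideal.span {(diagonal d).det} ≤
      detDiv (Fintype.card ι - k) (diagonal d) * detDiv k (C * diagonal d) := by
  rw [detDiv, Ideal.span_mul_span', Ideal.span_le]
  rintro _ ⟨_, ⟨f, g, rfl⟩, _, rfl, rfl⟩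
  set S := (univ.map g)ᶜ
  have hS : S.card = Fintype.card ι - k := by simp [S, card_compl]
  have hminor : ((C * diagonal d).submatrix f g).det = (C.submatrix f g).det * ∏ j, d (g j) := by
    rw [show (C * diagonal d).submatrix f g = C.submatrix f g * diagonal (d ∘ g) by
      ext; simp [mul_diagonal], det_mul, det_diagonal]
    rfl
  have hsplit : ∏ t, d t = (∏ t ∈ S, d t) * ∏ j, d (g j) := by
    rw [← prod_map univ g, mul_comm, prod_mul_prod_compl]
  have hfactor : (C.submatrix f g).det * (diagonal d).det =
      (∏ t ∈ S, d t) * ((C * diagonal d).submatrix f g).det := by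
    rw [det_diagonal, hsplit, hminor]
    ring
  dsimp only [SetLike.mem_coe]
  rw [hfactor]
  exact Ideal.mul_mem_mul (hS ▸ prod_mem_detDiv_diagonal d S) (Ideal.subset_span ⟨f, g, rfl⟩)

theorem detDiv_mul_detDiv_card_le [IsDomain R] [IsPrincipalIdealRing R] (k : ℕ)
    (A B : Matrix ι ι R) :
    detDiv k A * detDiv (Fintype.card ι) B ≤ detDiv (Fintype.card ι - k) B * detDiv k (A * B) := by
  rcases eq_or_ne B.det 0 with hB | hB
  · have hbot : detDiv (Fintype.card ι) B = ⊥ := by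
      simpa [hB] using detDiv_card_le_span_det B
    simp [hbot]
  obtain ⟨U, V, d, hU, hV, rfl⟩ := exists_isUnit_det_mul_diagonal_mul_eq B hB
  have hAB : A * (U * diagonal d * V) = A * U * diagonal d * V := by
    simp only [Matrix.mul_assoc]
  calc detDiv k A * detDiv (Fintype.card ι) (U * diagonal d * V)
      = detDiv k (A * U) * detDiv (Fintype.card ι) (diagonal d) := by
        rw [detDiv_mul_right_of_isUnit_det _ hU, detDiv_mul_right_of_isUnit_det _ hV,
          detDiv_mul_left_of_isUnit_det _ hU]
    _ ≤ detDiv k (A * U) * Ideal.span {(diagonal d).det} :=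
        Ideal.mul_mono_right (detDiv_card_le_span_det _)
    _ ≤ detDiv (Fintype.card ι - k) (diagonal d) * detDiv k (A * U * diagonal d) :=
        detDiv_mul_span_det_diagonal_le k _ d
    _ = _ := by
        rw [hAB, detDiv_mul_right_of_isUnit_det _ hV, detDiv_mul_right_of_isUnit_det _ hV,
          detDiv_mul_left_of_isUnit_det _ hU]

end detDiv

theorem detDiv_mul_dvd_of_pid_general (𝒪 : Type*) [CommRing 𝒪] [IsDomain 𝒪]
    [IsPrincipalIdealRing 𝒪] (n : ℕ) (A B : Matrix (Fin n) (Fin n) 𝒪) :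
    ∀ k, 1 ≤ k → k ≤ n →
      detDiv (n - k) B * detDiv k (A * B) ∣ detDiv k A * detDiv n B ∧
      detDiv (n - k) A * detDiv k (A * B) ∣ detDiv k B * detDiv n A := by
  intro k _ _
  have hdvd (M N : Matrix (Fin n) (Fin n) 𝒪) :
      detDiv (n - k) N * detDiv k (M * N) ∣ detDiv k M * detDiv n N :=
    Ideal.dvd_iff_le.2 (by simpa using detDiv_mul_detDiv_card_le k M N)
  refine ⟨hdvd A B, ?_⟩
  simpa only [← transpose_mul, detDiv_transpose] using hdvd Bᵀ Aᵀ

/-- Over a principal ideal domain, `δ_{n-k}(B) δ_k(A B)` divides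
`δ_k(A) δ_n(B)`, and `δ_{n-k}(A) δ_k(A B)` divides `δ_k(B) δ_n(A)`. -/
theorem detDiv_mul_dvd_of_pid (𝒪 : Type*) [CommRing 𝒪] [IsDomain 𝒪]
    [IsPrincipalIdealRing 𝒪] (n : ℕ) (A B : Matrix (Fin n) (Fin n) 𝒪)
    (hA : A.det ≠ 0) (hB : B.det ≠ 0) :
    ∀ k, 1 ≤ k → k ≤ n →
      detDiv (n - k) B * detDiv k (A * B) ∣ detDiv k A * detDiv n B ∧
      detDiv (n - k) A * detDiv k (A * B) ∣ detDiv k B * detDiv n A :=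
  detDiv_mul_dvd_of_pid_general 𝒪 n A B
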